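/- Let γ: ℝ → ℝ³ be smooth, 2π-periodic, and parametrized by centroaffine arclength, with p₁ = |γ, γ''', γ''|. Let X = a·γ + b·γ' + c·γ'' where a, b, c are smooth 2π-periodic functions satisfying b' = −a − (1/3)(c'' + 2p₁c). Then ∫₀^{2π} |X, γ', Y| dx = 0 for every vector field Y = ã·γ + b̃·γ' + c̃·γ'' with ã, b̃, c̃ smooth 2π-periodic and b̃' = −ã − (1/3)(c̃'' + 2p₁c̃), if and only if a = −(2/3)p₁c and c is constant. Consequently the kernel of the restricted pre-symplectic form is spanned by Z₀ = γ' and Z₁ = γ'' − (2/3)p₁γ. -/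

import Mathlib

open MeasureTheory intervalIntegral Set

/-- `det3 u v w` is the determinant of the 3×3 matrix with columns (equivalently, rows)
`u`, `v`, `w` in `ℝ³`. -/
noncomputable def det3 (u v w : Fin 3 → ℝ) : ℝ := Matrix.det (Matrix.of ![u, v, w])

lemma det3_lin (u v w : Fin 3 → ℝ) (A B C D E F : ℝ) :
    det3 (A • u + B • v + C • w) v (D • u + E • v + F • w)
      = (A * F - D * C) * det3 u v w := by
  simp [det3, Matrix.det_fin_three]
  ring

lemma det3_expand (u v w : Fin 3 → ℝ) :
    det3 u v w = u 0 * v 1 * w 2 - u 0 * v 2 * w 1 - u 1 * v 0 * w 2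
      + u 1 * v 2 * w 0 + u 2 * v 0 * w 1 - u 2 * v 1 * w 0 := by
  simp [det3, Matrix.det_fin_three]
  try ring

lemma contDiff_top_deriv {E : Type*} [NormedAddCommGroup E] [NormedSpace ℝ E]
    {f : ℝ → E} (hf : ContDiff ℝ (⊤ : ℕ∞) f) : ContDiff ℝ (⊤ : ℕ∞) (deriv f) := by
  have h : (((⊤ : ℕ∞) : WithTop ℕ∞) + 1) = ((⊤ : ℕ∞) : WithTop ℕ∞) := by
    rw [← WithTop.coe_one, ← WithTop.coe_add, top_add]
  rw [← h] at hf
  exact (contDiff_succ_iff_deriv.mp hf).2.2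

lemma periodic_deriv' {E : Type*} [NormedAddCommGroup E] [NormedSpace ℝ E]
    {f : ℝ → E} (hp : ∀ x, f (x + 2 * Real.pi) = f x) (x : ℝ) :
    deriv f (x + 2 * Real.pi) = deriv f x := by
  have h1 : deriv (fun y => f (y + 2 * Real.pi)) x = deriv f (x + 2 * Real.pi) :=
    deriv_comp_add_const f (2 * Real.pi) x
  rw [← h1]
  congr 1
  funext y
  exact hp y

lemma comp_apply_contDiff {f : ℝ → Fin 3 → ℝ} (hf : ContDiff ℝ (⊤ : ℕ∞) f) (i : Fin 3) :
    ContDiff ℝ (⊤ : ℕ∞) fun x => f x i :=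
  (ContinuousLinearMap.proj (R := ℝ) (φ := fun _ : Fin 3 => ℝ) i).contDiff.comp hf

lemma integral_deriv_eq_zero' {f : ℝ → ℝ} (hf : ContDiff ℝ (⊤ : ℕ∞) f)
    (hp : ∀ x, f (x + 2 * Real.pi) = f x) :
    ∫ x in (0:ℝ)..(2 * Real.pi), deriv f x = 0 := by
  have h1 : ∫ x in (0:ℝ)..(2 * Real.pi), deriv f x = f (2 * Real.pi) - f 0 :=
    integral_eq_sub_of_hasDerivAt
      (fun x _ => ((hf.differentiable (by simp)) x).hasDerivAt)
      ((contDiff_top_deriv hf).continuous.intervalIntegrable _ _)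
  rw [h1]
  have := hp 0
  rw [zero_add] at this
  rw [this, sub_self]

lemma zero_of_sq_integral_zero {g : ℝ → ℝ} (hg : Continuous g)
    (hp : ∀ x, g (x + 2 * Real.pi) = g x)
    (hint : ∫ x in (0:ℝ)..(2 * Real.pi), g x * g x = 0) : ∀ x, g x = 0 := by
  have h2π : (0:ℝ) < 2 * Real.pi := by positivity
  have hione : IntervalIntegrable (fun x => g x * g x) volume 0 (2 * Real.pi) :=
    (hg.mul hg).intervalIntegrable _ _
  have hae : (fun x => g x * g x) =ᵐ[volume.restrict (Ioc (0:ℝ) (2 * Real.pi))] 0 := by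
    rw [← integral_eq_zero_iff_of_le_of_nonneg_ae h2π.le
      (Filter.Eventually.of_forall fun x => mul_self_nonneg (g x)) hione]
    exact hint
  have heq : EqOn (fun x => g x * g x) 0 (Ioc (0:ℝ) (2 * Real.pi)) :=
    Measure.eqOn_Ioc_of_ae_eq volume hae (hg.mul hg).continuousOn continuousOn_const
  have hIoc : ∀ y ∈ Ioc (0:ℝ) (2 * Real.pi), g y = 0 := by
    intro y hy
    have := heq hy
    simpa [mul_self_eq_zero] using this
  intro x
  obtain ⟨y, hy, hxy⟩ := (Function.Periodic.exists_mem_Ico₀ hp h2π x)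
  rw [hxy]
  rcases eq_or_lt_of_le hy.1 with h0 | h0
  · have hz : g (2 * Real.pi) = 0 := hIoc _ ⟨h2π, le_refl _⟩
    have h2 := hp 0
    rw [zero_add] at h2
    rw [← h0, ← h2, hz]
  · exact hIoc y ⟨h0, hy.2.le⟩

/-- On the space of non-stretching (arclength-preserving) periodic vector fields along
a closed starlike curve `γ`, the pre-symplectic form `ω(X,Y) = ∮ |X, γ', Y| dx`
degenerates exactly on fields with `a = −(2/3)p₁c` and `c` constant; consequently the
kernel is spanned by `Z₀ = γ'` and `Z₁ = γ'' − (2/3)p₁γ`. -/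
theorem kernel_of_presymplectic_form
    (γ : ℝ → Fin 3 → ℝ) (hγ : ContDiff ℝ (⊤ : ℕ∞) γ)
    (hper : ∀ x, γ (x + 2 * Real.pi) = γ x)
    (harc : ∀ x, det3 (γ x) (deriv γ x) (deriv (deriv γ) x) = 1)
    (p₁ : ℝ → ℝ)
    (hp₁ : ∀ x, p₁ x = det3 (γ x) (deriv (deriv (deriv γ)) x) (deriv (deriv γ) x))
    (a b c : ℝ → ℝ)
    (ha : ContDiff ℝ (⊤ : ℕ∞) a) (hb : ContDiff ℝ (⊤ : ℕ∞) b) (hc : ContDiff ℝ (⊤ : ℕ∞) c)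
    (hpa : ∀ x, a (x + 2 * Real.pi) = a x)
    (hpb : ∀ x, b (x + 2 * Real.pi) = b x)
    (hpc : ∀ x, c (x + 2 * Real.pi) = c x)
    (hns : ∀ x, deriv b x = -a x - (1/3) * (deriv (deriv c) x + 2 * p₁ x * c x))
    (X : ℝ → Fin 3 → ℝ)
    (hX : ∀ x, X x = a x • γ x + b x • deriv γ x + c x • deriv (deriv γ) x) :
    ((∀ ta tb tc : ℝ → ℝ,
        ContDiff ℝ (⊤ : ℕ∞) ta → ContDiff ℝ (⊤ : ℕ∞) tb → ContDiff ℝ (⊤ : ℕ∞) tc →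
        (∀ x, ta (x + 2 * Real.pi) = ta x) →
        (∀ x, tb (x + 2 * Real.pi) = tb x) →
        (∀ x, tc (x + 2 * Real.pi) = tc x) →
        (∀ x, deriv tb x = -ta x - (1/3) * (deriv (deriv tc) x + 2 * p₁ x * tc x)) →
        ∫ x in (0:ℝ)..(2 * Real.pi),
          det3 (X x) (deriv γ x)
            (ta x • γ x + tb x • deriv γ x + tc x • deriv (deriv γ) x) = 0) ↔
      ((∀ x, a x = -(2/3) * p₁ x * c x) ∧ (∀ x y, c x = c y))) ∧
    (((∀ x, a x = -(2/3) * p₁ x * c x) ∧ (∀ x y, c x = c y)) →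
      ∃ c₀ c₁ : ℝ, ∀ x, X x
        = c₀ • deriv γ x + c₁ • (deriv (deriv γ) x - ((2/3) * p₁ x) • γ x)) := by
  -- basic smoothness and periodicity facts
  have hγ' : ContDiff ℝ (⊤ : ℕ∞) (deriv γ) := contDiff_top_deriv hγ
  have hγ'' : ContDiff ℝ (⊤ : ℕ∞) (deriv (deriv γ)) := contDiff_top_deriv hγ'
  have hγ''' : ContDiff ℝ (⊤ : ℕ∞) (deriv (deriv (deriv γ))) := contDiff_top_deriv hγ''
  have hperγ' : ∀ x, deriv γ (x + 2 * Real.pi) = deriv γ x := periodic_deriv' hper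
  have hperγ'' : ∀ x, deriv (deriv γ) (x + 2 * Real.pi) = deriv (deriv γ) x :=
    periodic_deriv' hperγ'
  have hperγ''' : ∀ x, deriv (deriv (deriv γ)) (x + 2 * Real.pi)
      = deriv (deriv (deriv γ)) x := periodic_deriv' hperγ''
  have hp₁s : ContDiff ℝ (⊤ : ℕ∞) p₁ := by
    have hrw : p₁ = fun x => (γ x 0) * (deriv (deriv (deriv γ)) x 1) * (deriv (deriv γ) x 2)
        - (γ x 0) * (deriv (deriv (deriv γ)) x 2) * (deriv (deriv γ) x 1)
        - (γ x 1) * (deriv (deriv (deriv γ)) x 0) * (deriv (deriv γ) x 2)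
        + (γ x 1) * (deriv (deriv (deriv γ)) x 2) * (deriv (deriv γ) x 0)
        + (γ x 2) * (deriv (deriv (deriv γ)) x 0) * (deriv (deriv γ) x 1)
        - (γ x 2) * (deriv (deriv (deriv γ)) x 1) * (deriv (deriv γ) x 0) :=
      funext fun x => by rw [hp₁ x, det3_expand]
    rw [hrw]
    exact (((((((comp_apply_contDiff hγ 0).mul (comp_apply_contDiff hγ''' 1)).mul
      (comp_apply_contDiff hγ'' 2)).sub (((comp_apply_contDiff hγ 0).mul
      (comp_apply_contDiff hγ''' 2)).mul (comp_apply_contDiff hγ'' 1))).sub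
      (((comp_apply_contDiff hγ 1).mul (comp_apply_contDiff hγ''' 0)).mul
      (comp_apply_contDiff hγ'' 2))).add (((comp_apply_contDiff hγ 1).mul
      (comp_apply_contDiff hγ''' 2)).mul (comp_apply_contDiff hγ'' 0))).add
      (((comp_apply_contDiff hγ 2).mul (comp_apply_contDiff hγ''' 0)).mul
      (comp_apply_contDiff hγ'' 1))).sub (((comp_apply_contDiff hγ 2).mul
      (comp_apply_contDiff hγ''' 1)).mul (comp_apply_contDiff hγ'' 0))
  have hp₁per : ∀ x, p₁ (x + 2 * Real.pi) = p₁ x := by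
    intro x
    rw [hp₁ (x + 2 * Real.pi), hp₁ x, hper x, hperγ''' x, hperγ'' x]
  -- the reduction of the integrand
  have hred : ∀ ta tb tc : ℝ → ℝ,
      (∫ x in (0:ℝ)..(2 * Real.pi),
        det3 (X x) (deriv γ x)
          (ta x • γ x + tb x • deriv γ x + tc x • deriv (deriv γ) x))
        = ∫ x in (0:ℝ)..(2 * Real.pi), (a x * tc x - ta x * c x) := by
    intro ta tb tc
    apply intervalIntegral.integral_congr
    intro x _
    simp only
    rw [hX x, det3_lin, harc x, mul_one]
  have hc' : ContDiff ℝ (⊤ : ℕ∞) (deriv c) := contDiff_top_deriv hc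
  have hc'' : ContDiff ℝ (⊤ : ℕ∞) (deriv (deriv c)) := contDiff_top_deriv hc'
  have hpc' : ∀ x, deriv c (x + 2 * Real.pi) = deriv c x := periodic_deriv' hpc
  have hpc'' : ∀ x, deriv (deriv c) (x + 2 * Real.pi) = deriv (deriv c) x :=
    periodic_deriv' hpc'
  constructor
  · constructor
    · intro H
      -- Step 1 : c is constant
      have H1 : ∫ x in (0:ℝ)..(2 * Real.pi),
          (a x * (fun _ : ℝ => (0:ℝ)) x - (fun x => deriv (deriv c) x) x * c x) = 0 := by
        rw [← hred (fun x => deriv (deriv c) x) (fun x => -(deriv c x)) (fun _ => 0)]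
        apply H
        · exact hc''
        · exact hc'.neg
        · exact contDiff_const
        · exact fun x => hpc'' x
        · intro x; simp only [neg_inj]; exact hpc' x
        · intro x; rfl
        · intro x
          rw [show (fun x => -deriv c x) = -deriv c from rfl, deriv.neg]
          simp [deriv_const']
      have e2 : ∫ x in (0:ℝ)..(2 * Real.pi), deriv (deriv c) x * c x = 0 := by
        have hfun : (fun x => a x * (fun _ : ℝ => (0:ℝ)) x
            - (fun x => deriv (deriv c) x) x * c x)
            = fun x => -(deriv (deriv c) x * c x) := funext fun x => by simp
        rw [hfun, intervalIntegral.integral_neg, neg_eq_zero] at H1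
        exact H1
      have hibp : ∫ x in (0:ℝ)..(2 * Real.pi),
          (deriv (deriv c) x * c x + deriv c x * deriv c x) = 0 := by
        have h1 : ∫ x in (0:ℝ)..(2 * Real.pi),
            (deriv (deriv c) x * c x + deriv c x * deriv c x)
            = deriv c (2 * Real.pi) * c (2 * Real.pi) - deriv c 0 * c 0 :=
          integral_eq_sub_of_hasDerivAt
            (fun x _ => ((hc'.differentiable (by simp) x).hasDerivAt).mul
              ((hc.differentiable (by simp) x).hasDerivAt))
            (((hc''.continuous.mul hc.continuous).add
              (hc'.continuous.mul hc'.continuous)).intervalIntegrable _ _)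
        rw [h1]
        have h2 := hpc' 0
        have h3 := hpc 0
        rw [zero_add] at h2 h3
        rw [h2, h3, sub_self]
      have hsq : ∫ x in (0:ℝ)..(2 * Real.pi), deriv c x * deriv c x = 0 := by
        have hfun : (fun x => deriv c x * deriv c x)
            = fun x => (deriv (deriv c) x * c x + deriv c x * deriv c x)
              - deriv (deriv c) x * c x := funext fun x => by ring
        rw [hfun, intervalIntegral.integral_sub
          (f := fun x => deriv (deriv c) x * c x + deriv c x * deriv c x)
          (g := fun x => deriv (deriv c) x * c x)
          (((hc''.continuous.mul hc.continuous).add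
            (hc'.continuous.mul hc'.continuous)).intervalIntegrable _ _)
          ((hc''.continuous.mul hc.continuous).intervalIntegrable _ _), hibp, e2, sub_zero]
      have hc0 : ∀ x, deriv c x = 0 :=
        zero_of_sq_integral_zero hc'.continuous hpc' hsq
      have hCc : ∀ x y, c x = c y :=
        is_const_of_deriv_eq_zero (hc.differentiable (by simp)) hc0
      refine ⟨?_, hCc⟩
      -- Step 2 : a = -(2/3) p₁ c
      have hgs : ContDiff ℝ (⊤ : ℕ∞) (fun x => a x + 2/3 * p₁ x * c x) :=
        ha.add ((contDiff_const.mul hp₁s).mul hc)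
      have hgp : ∀ x, (fun x => a x + 2/3 * p₁ x * c x) (x + 2 * Real.pi)
          = (fun x => a x + 2/3 * p₁ x * c x) x := by
        intro x; simp only; rw [hpa x, hp₁per x, hpc x]
      have hg's : ContDiff ℝ (⊤ : ℕ∞) (deriv (fun x => a x + 2/3 * p₁ x * c x)) :=
        contDiff_top_deriv hgs
      have hg''s : ContDiff ℝ (⊤ : ℕ∞) (deriv (deriv (fun x => a x + 2/3 * p₁ x * c x))) :=
        contDiff_top_deriv hg's
      have hg'p : ∀ x, deriv (fun x => a x + 2/3 * p₁ x * c x) (x + 2 * Real.pi)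
          = deriv (fun x => a x + 2/3 * p₁ x * c x) x := periodic_deriv' hgp
      have hg''p : ∀ x, deriv (deriv (fun x => a x + 2/3 * p₁ x * c x)) (x + 2 * Real.pi)
          = deriv (deriv (fun x => a x + 2/3 * p₁ x * c x)) x := periodic_deriv' hg'p
      have H2 : ∫ x in (0:ℝ)..(2 * Real.pi),
          (a x * (fun x => a x + 2/3 * p₁ x * c x) x
            - (fun x => -(1/3) * (deriv (deriv (fun x => a x + 2/3 * p₁ x * c x)) x
              + 2 * p₁ x * (a x + 2/3 * p₁ x * c x))) x * c x) = 0 := by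
        rw [← hred (fun x => -(1/3) * (deriv (deriv (fun x => a x + 2/3 * p₁ x * c x)) x
              + 2 * p₁ x * (a x + 2/3 * p₁ x * c x))) (fun _ => 0)
              (fun x => a x + 2/3 * p₁ x * c x)]
        apply H
        · exact contDiff_const.mul (hg''s.add ((contDiff_const.mul hp₁s).mul
            (ha.add ((contDiff_const.mul hp₁s).mul hc))))
        · exact contDiff_const
        · exact hgs
        · intro x; simp only [hg''p x, hp₁per x, hpa x, hpc x]
        · intro x; rfl
        · exact hgp
        · intro x
          rw [deriv_const]
          ring
      -- rewrite the integrand as  g² + (c 0 / 3) * g''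
      have hfun : (fun x => a x * (fun x => a x + 2/3 * p₁ x * c x) x
            - (fun x => -(1/3) * (deriv (deriv (fun x => a x + 2/3 * p₁ x * c x)) x
              + 2 * p₁ x * (a x + 2/3 * p₁ x * c x))) x * c x)
          = fun x => (a x + 2/3 * p₁ x * c x) * (a x + 2/3 * p₁ x * c x)
            + (c 0 / 3) * deriv (deriv (fun x => a x + 2/3 * p₁ x * c x)) x := by
        funext x
        have hx : c x = c 0 := hCc x 0
        simp only
        rw [hx]
        ring
      rw [hfun, intervalIntegral.integral_add
        (f := fun x => (a x + 2/3 * p₁ x * c x) * (a x + 2/3 * p₁ x * c x))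
        (g := fun x => (c 0 / 3) * deriv (deriv (fun x => a x + 2/3 * p₁ x * c x)) x)
        (((hgs.continuous).mul (hgs.continuous)).intervalIntegrable _ _)
        ((continuous_const.mul hg''s.continuous).intervalIntegrable _ _),
        intervalIntegral.integral_const_mul,
        integral_deriv_eq_zero' hg's hg'p, mul_zero, add_zero] at H2
      have hgzero : ∀ x, (fun x => a x + 2/3 * p₁ x * c x) x = 0 :=
        zero_of_sq_integral_zero hgs.continuous hgp H2
      intro x
      have := hgzero x
      simp only at this
      linarith
    · -- reverse direction
      rintro ⟨hA, hCc⟩ ta tb tc hta htb htc hpta hptb hptc hcon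
      rw [hred ta tb tc]
      have htc' : ContDiff ℝ (⊤ : ℕ∞) (deriv tc) := contDiff_top_deriv htc
      have htc'' : ContDiff ℝ (⊤ : ℕ∞) (deriv (deriv tc)) := contDiff_top_deriv htc'
      have htb' : ContDiff ℝ (⊤ : ℕ∞) (deriv tb) := contDiff_top_deriv htb
      have hptc' := periodic_deriv' hptc
      have hfun : (fun x => a x * tc x - ta x * c x)
          = fun x => c 0 * deriv tb x + (c 0 / 3) * deriv (deriv tc) x := by
        funext x
        have hx : c x = c 0 := hCc x 0
        have h1 := hcon x
        rw [hA x, hx]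
        linear_combination (-(c 0)) * h1
      rw [hfun, intervalIntegral.integral_add
        (f := fun x => c 0 * deriv tb x) (g := fun x => c 0 / 3 * deriv (deriv tc) x)
        ((continuous_const.mul htb'.continuous).intervalIntegrable _ _)
        ((continuous_const.mul htc''.continuous).intervalIntegrable _ _),
        intervalIntegral.integral_const_mul, intervalIntegral.integral_const_mul,
        integral_deriv_eq_zero' htb hptb, integral_deriv_eq_zero' htc' hptc',
        mul_zero, mul_zero, add_zero]
  · -- the kernel description
    rintro ⟨hA, hCc⟩
    have hceq : c = fun _ => c 0 := funext fun x => hCc x 0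
    have hdc : ∀ x, deriv (deriv c) x = 0 := by
      intro x
      rw [hceq]
      simp
    have hdb : ∀ x, deriv b x = 0 := by
      intro x
      rw [hns x, hA x, hdc x]
      ring
    have hbconst : ∀ x y, b x = b y :=
      is_const_of_deriv_eq_zero (hb.differentiable (by simp)) hdb
    refine ⟨b 0, c 0, fun x => ?_⟩
    rw [hX x, hA x, hbconst x 0, hCc x 0]
    funext i
    simp only [Pi.add_apply, Pi.smul_apply, Pi.sub_apply, smul_eq_mul]
    ring
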